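/- Let m ≥ 2 be an integer and G a CDF on ℝ with finite mean and λ₂(G) ≠ 0. Then the L-skewness and L-kurtosis of the Hoeffding transform satisfy λ₃(H_m(G))/λ₂(H_m(G)) = ((m−2)/m) · λ₃(G)/λ₂(G) and λ₄(H_m(G))/λ₂(H_m(G)) = ((m−2)(m−3)/m²) · λ₄(G)/λ₂(G) − 1/m². In particular, applied to the empirical CDF 𝔽_n of a non-degenerate sample, Sk(𝔽_{n,m}) = ((m−2)/m) Sk(𝔽_n) and Kurt(𝔽_{n,m}) = ((m−2)(m−3)/m²) Kurt(𝔽_n) − 1/m², where Sk = λ₃/λ₂ and Kurt = λ₄/λ₂. -/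

import Mathlib

open MeasureTheory Filter Set
open scoped BoundedContinuousFunction ProbabilityTheory

noncomputable section

/-- Density of the Beta(j, m-j+1) distribution. -/
def betaDens (m j : ℕ) (u : ℝ) : ℝ :=
  (m : ℝ) * ((m - 1).choose (j - 1) : ℝ) * u ^ (j - 1) * (1 - u) ^ (m - j)

/-- Quantile function (left-continuous generalized inverse). -/
def quantile (G : ℝ → ℝ) (p : ℝ) : ℝ :=
  sInf {x : ℝ | p ≤ G x}

/-- `G` is a cumulative distribution function on ℝ. -/
structure IsCDF (G : ℝ → ℝ) : Prop where
  mono : Monotone G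
  rightCont : ∀ x, ContinuousWithinAt G (Ici x) x
  tendsto_atBot : Tendsto G atBot (nhds 0)
  tendsto_atTop : Tendsto G atTop (nhds 1)

/-- `G` has finite mean: its quantile function is integrable on (0,1). -/
def HasFiniteMean (G : ℝ → ℝ) : Prop :=
  IntegrableOn (fun u => quantile G u) (Ioo (0:ℝ) 1)

/-- Expected j-th order statistic from a sample of size m drawn from G. -/
def muOS (m j : ℕ) (G : ℝ → ℝ) : ℝ :=
  ∫ u in Ioo (0:ℝ) 1, quantile G u * betaDens m j u

/-- The Hoeffding CDF operator `H_m`. -/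
def hoeffCDF (m : ℕ) (G : ℝ → ℝ) (x : ℝ) : ℝ :=
  (m : ℝ)⁻¹ * ∑ j ∈ Finset.Icc 1 m, if muOS m j G ≤ x then (1:ℝ) else 0

/-- The quantile-Hoeffding operator `I_m`. -/
def quantHoeff (m : ℕ) (h : ℝ → ℝ) (u : ℝ) : ℝ :=
  ∑ j ∈ Finset.Icc 1 m,
    (∫ t in Ioo (0:ℝ) 1, h t * betaDens m j t) *
      (if u ∈ Ioc (((j : ℝ) - 1) / m) ((j : ℝ) / m) then (1:ℝ) else 0)

/-- Empirical CDF of the reals `x 0, ..., x (n-1)`. -/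
def ecdf (n : ℕ) (x : ℕ → ℝ) (t : ℝ) : ℝ :=
  (n : ℝ)⁻¹ * ∑ i ∈ Finset.range n, if x i ≤ t then (1:ℝ) else 0

/-- Empirical CDF of the random sample `X 0, ..., X (n-1)`. -/
def empCDF {Ω : Type*} (X : ℕ → Ω → ℝ) (n : ℕ) (ω : Ω) : ℝ → ℝ :=
  fun t => (n : ℝ)⁻¹ * ∑ i ∈ Finset.range n, if X i ω ≤ t then (1:ℝ) else 0

/-- The L-scale (second L-moment) `λ₂`. -/
def lambda2 (G : ℝ → ℝ) : ℝ :=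
  ∫ p in Ioo (0:ℝ) 1, quantile G p * (2 * p - 1)

/-- The third L-moment `λ₃`. -/
def lambda3 (G : ℝ → ℝ) : ℝ :=
  ∫ p in Ioo (0:ℝ) 1, quantile G p * (6 * p ^ 2 - 6 * p + 1)

/-- The fourth L-moment `λ₄`. -/
def lambda4 (G : ℝ → ℝ) : ℝ :=
  ∫ p in Ioo (0:ℝ) 1, quantile G p * (20 * p ^ 3 - 30 * p ^ 2 + 12 * p - 1)

/-!
The Hoeffding transform `H_m(G)` is the step CDF with mass `1/m` at each expected order statistic
`μ_{j:m}`, so `λ_r(H_m(G)) = ∑ⱼ μ_{j:m} ∫_{(j-1)/m}^{j/m} w_{r-1}`. Since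
`μ_{j:m} = ∫ G⁻¹ f_{B_{j:m}}`, this is `∫ G⁻¹ · K(w_{r-1})` with
`K(w) = ∑ⱼ (∫_{(j-1)/m}^{j/m} w) f_{B_{j:m}}`, the Kantorovich polynomial of degree `m - 1` of `w`.
The factorial moments of the binomial distribution evaluate `K` on the shifted Legendre
polynomials: `K(w₁) = (m-1)/m · w₁`, `K(w₂) = (m-1)(m-2)/m² · w₂` and
`K(w₃) = (m-1)(m-2)(m-3)/m³ · w₃ - (m-1)/m³ · w₁`. So `λ₂, λ₃, λ₄` of `H_m(G)` are explicit
combinations of those of `G`, and the ratios follow.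

Monotonicity of `j ↦ μ_{j:m}` (needed to read off the quantile function of `H_m(G)`) holds because
`f_{B_{j+1:m}} - f_{B_{j:m}}` has integral zero and changes sign once, at `j/m`.

The empirical CDF of a sample is the same kind of step CDF (after sorting), with L-scale
`λ₂ = n⁻² ∑_{i<j} (x₍ⱼ₎ - x₍ᵢ₎)`, positive unless the sample is constant.
-/

/-- `lambda2`, `lambda3`, `lambda4` are `lmoment` with the weights `w₁`, `w₂`, `w₃`. -/
def lmoment (w : ℝ → ℝ) (G : ℝ → ℝ) : ℝ :=
  ∫ p in Ioo (0:ℝ) 1, quantile G p * w p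

/-- The Kantorovich polynomial of degree `m - 1` of `w`. It is the adjoint of the
quantile-Hoeffding operator: `∫ I_m(h) w = ∫ h · hoeffAdjoint m w`. -/
def hoeffAdjoint (m : ℕ) (w : ℝ → ℝ) (u : ℝ) : ℝ :=
  ∑ i ∈ Finset.range m, (∫ p in (i / m : ℝ)..((i + 1) / m), w p) * betaDens m (i + 1) u

section

open Finset

theorem sum_descFactorial_mul_bernstein (n r : ℕ) (u : ℝ) :
    ∑ k ∈ range (n + 1), (k.descFactorial r : ℝ) * (n.choose k * u ^ k * (1 - u) ^ (n - k))
      = n.descFactorial r * u ^ r := by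
  rcases lt_or_ge n r with hnr | hrn
  · rw [Nat.descFactorial_eq_zero_iff_lt.2 hnr, Nat.cast_zero, zero_mul]
    exact sum_eq_zero fun k hk => by
      rw [Nat.descFactorial_eq_zero_iff_lt.2 (by grind), Nat.cast_zero, zero_mul]
  have hshift : ∀ i ∈ range (n - r + 1),
      ((r + i).descFactorial r : ℝ) * (n.choose (r + i) * u ^ (r + i) * (1 - u) ^ (n - (r + i)))
        = n.descFactorial r * u ^ r * (u ^ i * (1 - u) ^ (n - r - i) * (n - r).choose i) := by
    intro i _
    have hchoose :
        (r + i).descFactorial r * n.choose (r + i) = n.descFactorial r * (n - r).choose i := by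
      rw [Nat.descFactorial_eq_factorial_mul_choose, Nat.descFactorial_eq_factorial_mul_choose,
        mul_assoc, mul_comm ((r + i).choose r), Nat.choose_mul (by omega), Nat.add_sub_cancel_left,
        mul_assoc]
    have hchooseR := congrArg (Nat.cast (R := ℝ)) hchoose
    push_cast at hchooseR
    rw [show n - (r + i) = n - r - i by omega, pow_add]
    linear_combination (u ^ r * u ^ i * (1 - u) ^ (n - r - i)) * hchooseR
  rw [show n + 1 = r + (n - r + 1) by omega, sum_range_add, sum_eq_zero fun k hk => by
      rw [Nat.descFactorial_eq_zero_iff_lt.2 (mem_range.1 hk), Nat.cast_zero, zero_mul],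
    zero_add, sum_congr rfl hshift, ← mul_sum, ← add_pow, add_sub_cancel, one_pow, mul_one]

theorem continuous_betaDens (m j : ℕ) : Continuous (betaDens m j) := by
  unfold betaDens; fun_prop

theorem betaDens_succ_succ (n k : ℕ) (u : ℝ) :
    betaDens (n + 1) (k + 1) u = (n + 1) * (n.choose k * u ^ k * (1 - u) ^ (n - k)) := by
  rw [betaDens, Nat.add_sub_cancel, Nat.add_sub_cancel, Nat.add_sub_add_right]
  push_cast; ring

theorem sum_cubic_mul_betaDens (n : ℕ) (a b c d u : ℝ) :
    ∑ k ∈ range (n + 1),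
        (a + b * k + c * (k * (k - 1)) + d * (k * (k - 1) * (k - 2))) * betaDens (n + 1) (k + 1) u
      = (n + 1) * (a + b * (n * u) + c * (n * (n - 1) * u ^ 2)
          + d * (n * (n - 1) * (n - 2) * u ^ 3)) := by
  have h0 := sum_descFactorial_mul_bernstein n 0 u
  have h1 := sum_descFactorial_mul_bernstein n 1 u
  have h2 := sum_descFactorial_mul_bernstein n 2 u
  have h3 := sum_descFactorial_mul_bernstein n 3 u
  have hcast3 : ∀ k : ℕ, (k.descFactorial 3 : ℝ) = k * (k - 1) * (k - 2) := fun k => by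
    rw [Nat.descFactorial_succ, Nat.cast_mul, Nat.cast_descFactorial_two]
    rcases lt_or_ge k 2 with h | h
    · interval_cases k <;> simp
    · rw [Nat.cast_sub h]; push_cast; ring
  simp only [Nat.descFactorial_zero, Nat.descFactorial_one, Nat.cast_one, one_mul, pow_zero,
    Nat.cast_descFactorial_two, hcast3, pow_one] at h0 h1 h2 h3
  have hterm : ∀ k ∈ range (n + 1),
      (a + b * k + c * (k * (k - 1)) + d * (k * (k - 1) * (k - 2))) * betaDens (n + 1) (k + 1) u
        = (n + 1) * (a * (n.choose k * u ^ k * (1 - u) ^ (n - k))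
          + b * (k * (n.choose k * u ^ k * (1 - u) ^ (n - k)))
          + c * (k * (k - 1) * (n.choose k * u ^ k * (1 - u) ^ (n - k)))
          + d * (k * (k - 1) * (k - 2) * (n.choose k * u ^ k * (1 - u) ^ (n - k)))) := by
    intro k _
    rw [betaDens_succ_succ]; ring
  simp only [sum_congr rfl hterm, ← mul_sum, sum_add_distrib]
  rw [h0, h1, h2, h3]
  ring

theorem integral_w₁ (a b : ℝ) : ∫ p in a..b, (2 * p - 1) = (b ^ 2 - b) - (a ^ 2 - a) := by
  refine intervalIntegral.integral_eq_sub_of_hasDerivAt (f := fun p => p ^ 2 - p)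
    (fun x _ => ?_) ((by fun_prop : Continuous fun p : ℝ => 2 * p - 1).intervalIntegrable _ _)
  convert (hasDerivAt_pow 2 x).fun_sub (hasDerivAt_id' x) using 1
  norm_num

theorem integral_w₂ (a b : ℝ) :
    ∫ p in a..b, (6 * p ^ 2 - 6 * p + 1)
      = (2 * b ^ 3 - 3 * b ^ 2 + b) - (2 * a ^ 3 - 3 * a ^ 2 + a) := by
  refine intervalIntegral.integral_eq_sub_of_hasDerivAt (f := fun p => 2 * p ^ 3 - 3 * p ^ 2 + p)
    (fun x _ => ?_)
    ((by fun_prop : Continuous fun p : ℝ => 6 * p ^ 2 - 6 * p + 1).intervalIntegrable _ _)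
  convert (((hasDerivAt_pow 3 x).const_mul 2).fun_sub ((hasDerivAt_pow 2 x).const_mul 3)).fun_add
    (hasDerivAt_id' x) using 1
  norm_num; ring

theorem integral_w₃ (a b : ℝ) :
    ∫ p in a..b, (20 * p ^ 3 - 30 * p ^ 2 + 12 * p - 1)
      = (5 * b ^ 4 - 10 * b ^ 3 + 6 * b ^ 2 - b) - (5 * a ^ 4 - 10 * a ^ 3 + 6 * a ^ 2 - a) := by
  refine intervalIntegral.integral_eq_sub_of_hasDerivAt
    (f := fun p => 5 * p ^ 4 - 10 * p ^ 3 + 6 * p ^ 2 - p) (fun x _ => ?_)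
    ((by fun_prop : Continuous fun p : ℝ => 20 * p ^ 3 - 30 * p ^ 2 + 12 * p - 1).intervalIntegrable
      _ _)
  convert ((((hasDerivAt_pow 4 x).const_mul 5).fun_sub ((hasDerivAt_pow 3 x).const_mul 10)).fun_add
    ((hasDerivAt_pow 2 x).const_mul 6)).fun_sub (hasDerivAt_id' x) using 1
  norm_num; ring

theorem hoeffAdjoint_w₁ (m : ℕ) (u : ℝ) :
    hoeffAdjoint m (fun p => 2 * p - 1) u = ((m : ℝ) - 1) / m * (2 * u - 1) := by
  rcases m with _ | n
  · simp [hoeffAdjoint]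
  have hm : ((n + 1 : ℕ) : ℝ) ≠ 0 := by positivity
  -- the integral over `[k/m, (k+1)/m]` is a cubic in `k`, expanded in falling factorials
  have hterm : ∀ k ∈ range (n + 1),
      (∫ p in (k / (n + 1 : ℕ) : ℝ)..((k + 1) / (n + 1 : ℕ)), (2 * p - 1))
          * betaDens (n + 1) (k + 1) u
        = ((-(n : ℝ)) / (n + 1) ^ 2 + 2 / (n + 1) ^ 2 * k + 0 * (k * (k - 1))
            + 0 * (k * (k - 1) * (k - 2))) * betaDens (n + 1) (k + 1) u := by
    intro k _
    rw [integral_w₁]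
    congr 1
    field_simp
    push_cast
    ring
  rw [hoeffAdjoint, sum_congr rfl hterm, sum_cubic_mul_betaDens]
  field_simp
  push_cast
  ring

theorem hoeffAdjoint_w₂ (m : ℕ) (u : ℝ) :
    hoeffAdjoint m (fun p => 6 * p ^ 2 - 6 * p + 1) u
      = ((m : ℝ) - 1) * ((m : ℝ) - 2) / (m : ℝ) ^ 2 * (6 * u ^ 2 - 6 * u + 1) := by
  rcases m with _ | n
  · simp [hoeffAdjoint]
  have hm : ((n + 1 : ℕ) : ℝ) ≠ 0 := by positivity
  have hterm : ∀ k ∈ range (n + 1),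
      (∫ p in (k / (n + 1 : ℕ) : ℝ)..((k + 1) / (n + 1 : ℕ)), (6 * p ^ 2 - 6 * p + 1))
          * betaDens (n + 1) (k + 1) u
        = ((2 - 3 * (n + 1) + (n + 1) ^ 2) / ((n : ℝ) + 1) ^ 3
            + (12 - 6 * (n + 1)) / ((n : ℝ) + 1) ^ 3 * k
            + 6 / ((n : ℝ) + 1) ^ 3 * (k * (k - 1)) + 0 * (k * (k - 1) * (k - 2)))
          * betaDens (n + 1) (k + 1) u := by
    intro k _
    rw [integral_w₂]
    congr 1
    field_simp
    push_cast
    ring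
  rw [hoeffAdjoint, sum_congr rfl hterm, sum_cubic_mul_betaDens]
  field_simp
  push_cast
  ring

theorem hoeffAdjoint_w₃ (m : ℕ) (u : ℝ) :
    hoeffAdjoint m (fun p => 20 * p ^ 3 - 30 * p ^ 2 + 12 * p - 1) u
      = ((m : ℝ) - 1) * ((m : ℝ) - 2) * ((m : ℝ) - 3) / (m : ℝ) ^ 3
          * (20 * u ^ 3 - 30 * u ^ 2 + 12 * u - 1) - ((m : ℝ) - 1) / (m : ℝ) ^ 3 * (2 * u - 1) := by
  rcases m with _ | n
  · simp [hoeffAdjoint]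
  have hm : ((n + 1 : ℕ) : ℝ) ≠ 0 := by positivity
  have hterm : ∀ k ∈ range (n + 1),
      (∫ p in (k / (n + 1 : ℕ) : ℝ)..((k + 1) / (n + 1 : ℕ)),
            (20 * p ^ 3 - 30 * p ^ 2 + 12 * p - 1))
          * betaDens (n + 1) (k + 1) u
        = ((5 - 10 * (n + 1) + 6 * (n + 1) ^ 2 - (n + 1) ^ 3) / ((n : ℝ) + 1) ^ 4
            + (70 - 60 * (n + 1) + 12 * (n + 1) ^ 2) / ((n : ℝ) + 1) ^ 4 * k
            + (90 - 30 * (n + 1)) / ((n : ℝ) + 1) ^ 4 * (k * (k - 1))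
            + 20 / ((n : ℝ) + 1) ^ 4 * (k * (k - 1) * (k - 2)))
          * betaDens (n + 1) (k + 1) u := by
    intro k _
    rw [integral_w₃]
    congr 1
    field_simp
    push_cast
    ring
  rw [hoeffAdjoint, sum_congr rfl hterm, sum_cubic_mul_betaDens]
  field_simp
  push_cast
  ring

end

theorem quantile_le_quantile {G : ℝ → ℝ} {p q : ℝ} (hpq : p ≤ q) (hp : BddBelow {x | p ≤ G x})
    (hq : {x | q ≤ G x}.Nonempty) : quantile G p ≤ quantile G q :=
  csInf_le_csInf hp hq fun _ hx => hpq.trans hx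

theorem IsCDF.monotoneOn_quantile {G : ℝ → ℝ} (hG : IsCDF G) :
    MonotoneOn (quantile G) (Ioo 0 1) := by
  intro p hp q hq hpq
  refine quantile_le_quantile hpq ?_ (hG.tendsto_atTop.eventually (eventually_ge_nhds hq.2)).exists
  obtain ⟨x₀, hx₀⟩ := (hG.tendsto_atBot.eventually (eventually_lt_nhds hp.1)).exists
  exact ⟨x₀, fun y (hy : p ≤ G y) => le_of_not_gt fun hlt => (hy.trans (hG.mono hlt.le)).not_gt hx₀⟩

theorem HasFiniteMean.integrableOn_mul {G w : ℝ → ℝ} (hG : HasFiniteMean G) (hw : Continuous w) :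
    IntegrableOn (fun p => quantile G p * w p) (Ioo 0 1) :=
  IntegrableOn.mul_continuousOn_of_subset hG hw.continuousOn measurableSet_Ioo isCompact_Icc
    Ioo_subset_Icc_self

theorem lmoment_const_mul (c : ℝ) (w G : ℝ → ℝ) :
    lmoment (fun p => c * w p) G = c * lmoment w G := by
  rw [lmoment, lmoment, ← integral_const_mul]
  simp only [mul_left_comm]

theorem lmoment_sub {G w w' : ℝ → ℝ} (hG : HasFiniteMean G) (hw : Continuous w)
    (hw' : Continuous w') : lmoment (fun p => w p - w' p) G = lmoment w G - lmoment w' G := by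
  rw [lmoment, lmoment, lmoment, ← integral_sub (hG.integrableOn_mul hw) (hG.integrableOn_mul hw')]
  simp only [mul_sub]

section

variable {n : ℕ} {v : ℕ → ℝ}

theorem exists_mem_Ioc_div (hn : 0 < n) {p : ℝ} (hp : p ∈ Ioo (0 : ℝ) 1) :
    ∃ i < n, p ∈ Ioc ((i : ℝ) / n) ((i + 1) / n) := by
  have hn' : (0 : ℝ) < n := by exact_mod_cast hn
  obtain ⟨i, hi⟩ := Nat.exists_eq_add_one_of_ne_zero (Nat.ceil_pos.2 (mul_pos hp.1 hn')).ne'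
  obtain ⟨hlt, hle⟩ := (Nat.ceil_eq_iff (Nat.succ_ne_zero i)).1 hi
  push_cast at hlt hle
  refine ⟨i, ?_, (div_lt_iff₀ hn').2 hlt, (le_div_iff₀ hn').2 hle⟩
  have : (i : ℝ) < n := by nlinarith [hp.2]
  exact_mod_cast this

theorem setOf_le_ecdf_eq_Ici (hv : MonotoneOn v (Iio n)) {i : ℕ} (hi : i < n) {p : ℝ}
    (hp : p ∈ Ioc ((i : ℝ) / n) ((i + 1) / n)) : {x | p ≤ ecdf n v x} = Ici (v i) := by
  have hn : (0 : ℝ) < n := by exact_mod_cast (Nat.zero_lt_of_lt hi)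
  obtain ⟨hip, hpi⟩ : (i : ℝ) < p * n ∧ p * n ≤ i + 1 :=
    ⟨(div_lt_iff₀ hn).1 hp.1, (le_div_iff₀ hn).1 hp.2⟩
  ext x
  simp only [mem_ofPred_eq, mem_Ici, ecdf, Finset.sum_boole, inv_mul_eq_div, le_div_iff₀ hn]
  constructor
  · intro hx
    by_contra! hxv
    have hsub : {k ∈ Finset.range n | v k ≤ x} ⊆ Finset.range i := fun k hk => by
      rw [Finset.mem_filter, Finset.mem_range] at hk
      rw [Finset.mem_range]
      by_contra! hik
      exact (hk.2.trans_lt hxv).not_ge (hv (hi) hk.1 hik)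
    have := Finset.card_le_card hsub
    rw [Finset.card_range] at this
    have : (({k ∈ Finset.range n | v k ≤ x}.card : ℕ) : ℝ) ≤ i := by exact_mod_cast this
    linarith
  · intro hvx
    have hsub : Finset.range (i + 1) ⊆ {k ∈ Finset.range n | v k ≤ x} := fun k hk => by
      rw [Finset.mem_range] at hk
      rw [Finset.mem_filter, Finset.mem_range]
      exact ⟨by omega, (hv (show k < n by omega) hi (by omega)).trans hvx⟩
    have := Finset.card_le_card hsub
    rw [Finset.card_range] at this
    have : (i : ℝ) + 1 ≤ (({k ∈ Finset.range n | v k ≤ x}.card : ℕ) : ℝ) := by exact_mod_cast this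
    linarith

theorem quantile_ecdf (hv : MonotoneOn v (Iio n)) {i : ℕ} (hi : i < n) {p : ℝ}
    (hp : p ∈ Ioc ((i : ℝ) / n) ((i + 1) / n)) : quantile (ecdf n v) p = v i := by
  rw [quantile, setOf_le_ecdf_eq_Ici hv hi hp, csInf_Ici]

theorem monotoneOn_quantile_ecdf (hn : 0 < n) (hv : MonotoneOn v (Iio n)) :
    MonotoneOn (quantile (ecdf n v)) (Ioo 0 1) := by
  intro p hp q hq hpq
  obtain ⟨i, hi, hpi⟩ := exists_mem_Ioc_div hn hp
  obtain ⟨j, hj, hqj⟩ := exists_mem_Ioc_div hn hq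
  refine quantile_le_quantile hpq ?_ ?_
  · rw [setOf_le_ecdf_eq_Ici hv hi hpi]; exact bddBelow_Ici
  · rw [setOf_le_ecdf_eq_Ici hv hj hqj]; exact nonempty_Ici

theorem hasFiniteMean_ecdf (hn : 0 < n) (hv : MonotoneOn v (Iio n)) : HasFiniteMean (ecdf n v) := by
  have hcover : Ioo (0 : ℝ) 1 ⊆ ⋃ i ∈ Finset.range n, Ioc ((i : ℝ) / n) ((i + 1) / n) :=
    fun p hp => by
      obtain ⟨i, hi, hpi⟩ := exists_mem_Ioc_div hn hp
      exact mem_biUnion (Finset.mem_range.2 hi) hpi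
  refine IntegrableOn.mono_set ?_ hcover
  refine integrableOn_finset_iUnion.2 fun i hi => ?_
  exact (integrableOn_const (by simp) (by simp)).congr_fun
    (fun p hp => (quantile_ecdf hv (Finset.mem_range.1 hi) hp).symm) measurableSet_Ioc

theorem lmoment_ecdf (hn : 0 < n) (hv : MonotoneOn v (Iio n)) {w : ℝ → ℝ} (hw : Continuous w) :
    lmoment w (ecdf n v) = ∑ i ∈ Finset.range n, v i * ∫ p in (i / n : ℝ)..((i + 1) / n), w p := by
  have hle : ∀ i : ℕ, (i : ℝ) / n ≤ (i + 1) / n := fun i => by gcongr; linarith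
  have hpiece : ∀ i < n, EqOn (fun p => quantile (ecdf n v) p * w p) (fun p => v i * w p)
      (Ioc ((i : ℝ) / n) ((i + 1) / n)) := fun i hi p hp => by
    simp only [quantile_ecdf hv hi hp]
  have hint : ∀ i < n, IntervalIntegrable (fun p => quantile (ecdf n v) p * w p) volume
      ((i : ℝ) / n) (((i + 1 : ℕ) : ℝ) / n) := fun i hi => by
    rw [Nat.cast_succ, intervalIntegrable_iff_integrableOn_Ioc_of_le (hle i)]
    exact (hw.const_mul (v i)).integrableOn_Ioc.congr_fun (hpiece i hi).symm measurableSet_Ioc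
  calc lmoment w (ecdf n v) = ∫ p in (0 : ℝ)..1, quantile (ecdf n v) p * w p := by
        rw [lmoment, intervalIntegral.integral_of_le zero_le_one, integral_Ioc_eq_integral_Ioo]
    _ = ∑ i ∈ Finset.range n, ∫ p in (i / n : ℝ)..(((i + 1 : ℕ) : ℝ) / n),
          quantile (ecdf n v) p * w p := by
        rw [intervalIntegral.sum_integral_adjacent_intervals hint]
        simp [hn.ne']
    _ = ∑ i ∈ Finset.range n, v i * ∫ p in (i / n : ℝ)..((i + 1) / n), w p := by
        refine Finset.sum_congr rfl fun i hi => ?_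
        rw [Nat.cast_succ, ← intervalIntegral.integral_const_mul]
        refine intervalIntegral.integral_congr_ae (ae_of_all _ fun p hp => ?_)
        rw [uIoc_of_le (hle i)] at hp
        exact hpiece i (Finset.mem_range.1 hi) hp

end

theorem integral_mul_nonneg_of_monotoneOn {Q k : ℝ → ℝ} {c : ℝ} (hc : c ∈ Ioo (0 : ℝ) 1)
    (hQ : MonotoneOn Q (Ioo 0 1)) (hQk : IntegrableOn (fun u => Q u * k u) (Ioo 0 1))
    (hk : IntegrableOn k (Ioo 0 1)) (hk₀ : ∫ u in Ioo (0 : ℝ) 1, k u = 0)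
    (hsign : ∀ u ∈ Ioo (0 : ℝ) 1, 0 ≤ (u - c) * k u) :
    0 ≤ ∫ u in Ioo (0 : ℝ) 1, Q u * k u := by
  -- subtracting `Q c * k` does not change the integral, and makes the integrand nonnegative
  have hshift : ∫ u in Ioo (0 : ℝ) 1, Q u * k u = ∫ u in Ioo (0 : ℝ) 1, (Q u - Q c) * k u := by
    simp only [sub_mul]
    rw [integral_sub hQk (hk.const_mul _), integral_const_mul, hk₀, mul_zero, sub_zero]
  rw [hshift]
  refine setIntegral_nonneg measurableSet_Ioo fun u hu => ?_
  rcases lt_trichotomy u c with huc | rfl | hcu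
  · exact mul_nonneg_of_nonpos_of_nonpos (sub_nonpos.2 (hQ hu hc huc.le))
      (nonpos_of_mul_nonneg_right (hsign u hu) (sub_neg.2 huc))
  · simp
  · exact mul_nonneg (sub_nonneg.2 (hQ hc hu hcu.le))
      (nonneg_of_mul_nonneg_right (hsign u hu) (sub_pos.2 hcu))

theorem betaDens_succ_sub_betaDens (k l : ℕ) (u : ℝ) :
    betaDens (k + l + 2) (k + 2) u - betaDens (k + l + 2) (k + 1) u
      = (k + l + 2).choose (k + 1) * (u ^ k * (1 - u) ^ l) * ((k + l + 2) * u - (k + 1)) := by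
  have h₁ := congrArg (Nat.cast (R := ℝ)) (Nat.choose_mul_succ_eq (k + l + 1) (k + 1))
  have h₂ := congrArg (Nat.cast (R := ℝ)) (Nat.add_one_mul_choose_eq (k + l + 1) k)
  rw [show k + l + 1 + 1 - (k + 1) = l + 1 by omega] at h₁
  push_cast at h₁ h₂
  rw [betaDens, betaDens, show k + l + 2 - 1 = k + l + 1 by omega, show k + 2 - 1 = k + 1 by omega,
    show k + l + 2 - (k + 2) = l by omega, Nat.add_sub_cancel,
    show k + l + 2 - (k + 1) = l + 1 by omega]
  push_cast
  linear_combination (u ^ (k + 1) * (1 - u) ^ l) * h₁ - (u ^ k * (1 - u) ^ (l + 1)) * h₂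

theorem hasDerivAt_pow_mul_one_sub_pow (k l : ℕ) (u : ℝ) :
    HasDerivAt (fun u : ℝ => u ^ (k + 1) * (1 - u) ^ (l + 1))
      (u ^ k * (1 - u) ^ l * ((k + 1) - (k + l + 2) * u)) u := by
  refine ((hasDerivAt_pow (k + 1) u).fun_mul
    (((hasDerivAt_id' u).const_sub 1).fun_pow (l + 1))).congr_deriv ?_
  simp only [Nat.add_sub_cancel]
  push_cast; ring

theorem integral_betaDens_succ_sub_betaDens (k l : ℕ) :
    ∫ u in Ioo (0 : ℝ) 1, (betaDens (k + l + 2) (k + 2) u - betaDens (k + l + 2) (k + 1) u)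
      = 0 := by
  have hcont : Continuous fun u => betaDens (k + l + 2) (k + 2) u - betaDens (k + l + 2) (k + 1) u :=
    (continuous_betaDens _ _).sub (continuous_betaDens _ _)
  rw [← integral_Ioc_eq_integral_Ioo, ← intervalIntegral.integral_of_le zero_le_one,
    intervalIntegral.integral_eq_sub_of_hasDerivAt
      (f := fun u => -((k + l + 2).choose (k + 1) * (u ^ (k + 1) * (1 - u) ^ (l + 1))))
      (fun u _ => ?_) (hcont.intervalIntegrable _ _)]
  · simp
  · rw [betaDens_succ_sub_betaDens]
    convert ((hasDerivAt_pow_mul_one_sub_pow k l u).const_mul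
      ((k + l + 2).choose (k + 1) : ℝ)).fun_neg using 1
    ring

section

variable {m : ℕ} {G : ℝ → ℝ}

theorem muOS_le_muOS_succ (hq : MonotoneOn (quantile G) (Ioo 0 1)) (hG : HasFiniteMean G)
    (k l : ℕ) : muOS (k + l + 2) (k + 1) G ≤ muOS (k + l + 2) (k + 2) G := by
  have hcont : Continuous fun u => betaDens (k + l + 2) (k + 2) u - betaDens (k + l + 2) (k + 1) u :=
    (continuous_betaDens _ _).sub (continuous_betaDens _ _)
  have hm : (0 : ℝ) < k + l + 2 := by positivity
  have hc : ((k : ℝ) + 1) / (k + l + 2) ∈ Ioo (0 : ℝ) 1 :=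
    ⟨by positivity, (div_lt_one hm).2 (by linarith [(l.cast_nonneg : (0 : ℝ) ≤ l)])⟩
  have key := integral_mul_nonneg_of_monotoneOn hc hq (hG.integrableOn_mul hcont)
    (hcont.integrableOn_Icc.mono_set Ioo_subset_Icc_self) (integral_betaDens_succ_sub_betaDens k l)
    fun u hu => by
      have hP : 0 ≤ u ^ k * (1 - u) ^ l :=
        mul_nonneg (pow_nonneg hu.1.le _) (pow_nonneg (by linarith [hu.2]) _)
      have := mul_nonneg (mul_nonneg (mul_nonneg (Nat.cast_nonneg ((k + l + 2).choose (k + 1))) hP)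
        hm.le) (sq_nonneg (u - (k + 1) / (k + l + 2)))
      rw [betaDens_succ_sub_betaDens, show ((k : ℝ) + l + 2) * u - (k + 1)
        = (k + l + 2) * (u - (k + 1) / (k + l + 2)) by field_simp]
      linarith
  rw [muOS, muOS, ← sub_nonneg, ← integral_sub (hG.integrableOn_mul (continuous_betaDens _ _))
    (hG.integrableOn_mul (continuous_betaDens _ _))]
  simpa only [mul_sub] using key

theorem monotoneOn_muOS (hq : MonotoneOn (quantile G) (Ioo 0 1)) (hG : HasFiniteMean G) :
    MonotoneOn (fun i => muOS m (i + 1) G) (Iio m) := by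
  refine monotoneOn_of_le_succ ordConnected_Iio fun i _ _ hi => ?_
  rw [Order.succ_eq_add_one, mem_Iio] at hi
  obtain ⟨l, rfl⟩ : ∃ l, m = i + l + 2 := ⟨m - i - 2, by omega⟩
  exact muOS_le_muOS_succ hq hG i l

theorem hoeffCDF_eq_ecdf (m : ℕ) (G : ℝ → ℝ) :
    hoeffCDF m G = ecdf m (fun i => muOS m (i + 1) G) := by
  ext x
  rw [hoeffCDF, ecdf, Finset.range_eq_Ico,
    Finset.sum_Ico_add' (fun j => if muOS m j G ≤ x then (1 : ℝ) else 0), zero_add,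
    Finset.Ico_add_one_right_eq_Icc]

theorem lmoment_hoeffCDF (hm : 0 < m) (hq : MonotoneOn (quantile G) (Ioo 0 1))
    (hG : HasFiniteMean G) {w : ℝ → ℝ} (hw : Continuous w) :
    lmoment w (hoeffCDF m G) = lmoment (hoeffAdjoint m w) G := by
  rw [hoeffCDF_eq_ecdf, lmoment_ecdf hm (monotoneOn_muOS hq hG) hw, lmoment]
  simp only [hoeffAdjoint, Finset.mul_sum]
  rw [integral_finsetSum _ fun i _ => hG.integrableOn_mul ((continuous_betaDens _ _).const_mul _)]
  refine Finset.sum_congr rfl fun i _ => ?_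
  rw [muOS, ← integral_mul_const]
  congr 1 with u
  ring

theorem lambda2_hoeffCDF (hm : 0 < m) (hq : MonotoneOn (quantile G) (Ioo 0 1))
    (hG : HasFiniteMean G) : lambda2 (hoeffCDF m G) = ((m : ℝ) - 1) / m * lambda2 G := by
  change lmoment _ _ = _ * lmoment _ _
  rw [lmoment_hoeffCDF hm hq hG (by fun_prop), funext (hoeffAdjoint_w₁ m), lmoment_const_mul]

theorem lambda3_hoeffCDF (hm : 0 < m) (hq : MonotoneOn (quantile G) (Ioo 0 1))
    (hG : HasFiniteMean G) :
    lambda3 (hoeffCDF m G) = ((m : ℝ) - 1) * ((m : ℝ) - 2) / (m : ℝ) ^ 2 * lambda3 G := by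
  change lmoment _ _ = _ * lmoment _ _
  rw [lmoment_hoeffCDF hm hq hG (by fun_prop), funext (hoeffAdjoint_w₂ m), lmoment_const_mul]

theorem lambda4_hoeffCDF (hm : 0 < m) (hq : MonotoneOn (quantile G) (Ioo 0 1))
    (hG : HasFiniteMean G) :
    lambda4 (hoeffCDF m G) = ((m : ℝ) - 1) * ((m : ℝ) - 2) * ((m : ℝ) - 3) / (m : ℝ) ^ 3 * lambda4 G
      - ((m : ℝ) - 1) / (m : ℝ) ^ 3 * lambda2 G := by
  change lmoment _ _ = _ * lmoment _ _ - _ * lmoment _ _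
  rw [lmoment_hoeffCDF hm hq hG (by fun_prop), funext (hoeffAdjoint_w₃ m),
    lmoment_sub hG (by fun_prop) (by fun_prop), lmoment_const_mul, lmoment_const_mul]

theorem Lskewness_Lkurtosis_hoeffCDF (hm : 2 ≤ m) (hq : MonotoneOn (quantile G) (Ioo 0 1))
    (hG : HasFiniteMean G) (hl2 : lambda2 G ≠ 0) :
    (lambda3 (hoeffCDF m G) / lambda2 (hoeffCDF m G)
        = (((m : ℝ) - 2) / m) * (lambda3 G / lambda2 G)) ∧
    (lambda4 (hoeffCDF m G) / lambda2 (hoeffCDF m G)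
        = ((((m : ℝ) - 2) * ((m : ℝ) - 3)) / (m : ℝ) ^ 2) * (lambda4 G / lambda2 G)
            - 1 / (m : ℝ) ^ 2) := by
  have hm0 : 0 < m := by omega
  have hmR : (2 : ℝ) ≤ m := by exact_mod_cast hm
  have hm1 : (m : ℝ) - 1 ≠ 0 := by linarith
  rw [lambda2_hoeffCDF hm0 hq hG, lambda3_hoeffCDF hm0 hq hG, lambda4_hoeffCDF hm0 hq hG]
  constructor <;> field_simp

end

section

open Finset

theorem exists_monotoneOn_ecdf_eq (n : ℕ) (x : ℕ → ℝ) :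
    ∃ v : ℕ → ℝ, MonotoneOn v (Set.Iio n) ∧ ecdf n v = ecdf n x ∧ ∀ i < n, ∃ j < n, v j = x i := by
  set f : Fin n → ℝ := fun i => x i
  set σ := Tuple.sort f
  refine ⟨fun k => if h : k < n then f (σ ⟨k, h⟩) else 0, fun a ha b hb hab => ?_, ?_,
    fun i hi => ?_⟩
  · simp only [dif_pos (show a < n from ha), dif_pos (show b < n from hb)]
    exact Tuple.monotone_sort f (Fin.mk_le_mk.2 hab)
  · ext t
    simp only [ecdf, Finset.sum_range, Fin.is_lt, dif_pos, Fin.eta]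
    congr 1
    exact Equiv.sum_comp σ fun k => if f k ≤ t then 1 else 0
  · exact ⟨σ.symm ⟨i, hi⟩, (σ.symm ⟨i, hi⟩).isLt, by simp [f]⟩

theorem sum_mul_two_mul_add_one_sub (v : ℕ → ℝ) (n : ℕ) :
    ∑ i ∈ range n, v i * (2 * i + 1 - n) = ∑ j ∈ range n, ∑ i ∈ range j, (v j - v i) := by
  induction n with
  | zero => simp
  | succ n ih =>
    rw [sum_range_succ, sum_range_succ, ← ih, sum_sub_distrib, sum_const, card_range, nsmul_eq_mul]
    have : ∑ i ∈ range n, v i * (2 * i + 1 - (n + 1 : ℕ))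
        = ∑ i ∈ range n, v i * (2 * i + 1 - n) - ∑ i ∈ range n, v i := by
      rw [← sum_sub_distrib]
      exact sum_congr rfl fun i _ => by push_cast; ring
    rw [this]
    push_cast
    ring

variable {n : ℕ} {v : ℕ → ℝ}

theorem lambda2_ecdf (hn : 0 < n) (hv : MonotoneOn v (Set.Iio n)) :
    lambda2 (ecdf n v) = (∑ j ∈ range n, ∑ i ∈ range j, (v j - v i)) / (n : ℝ) ^ 2 := by
  have hn' : (n : ℝ) ≠ 0 := by positivity
  change lmoment _ _ = _
  rw [lmoment_ecdf hn hv (by fun_prop), ← sum_mul_two_mul_add_one_sub, sum_div]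
  refine sum_congr rfl fun i _ => ?_
  rw [integral_w₁]
  field_simp
  ring

theorem lambda2_ecdf_pos (hv : MonotoneOn v (Set.Iio n)) {i j : ℕ} (hi : i < n) (hj : j < n)
    (hij : v i ≠ v j) : 0 < lambda2 (ecdf n v) := by
  wlog hlt : v i < v j generalizing i j
  · exact this hj hi hij.symm (hij.symm.lt_of_le (not_lt.1 hlt))
  have hij' : i < j := lt_of_not_ge fun hji => (hv hj hi hji).not_gt hlt
  rw [lambda2_ecdf (by omega) hv]
  refine div_pos (sum_pos' (fun b hb => sum_nonneg fun a ha => ?_) ⟨j, mem_range.2 hj, ?_⟩)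
    (pow_pos (Nat.cast_pos.2 (by omega)) 2)
  · exact sub_nonneg.2 (hv (show a < n by grind) (mem_range.1 hb) (mem_range.1 ha).le)
  · exact sum_pos' (fun a ha => sub_nonneg.2 (hv (show a < n by grind) hj (mem_range.1 ha).le))
      ⟨i, mem_range.2 hij', sub_pos.2 hlt⟩

end

/-- Transformation of L-skewness and L-kurtosis under the Hoeffding operator;
in particular for the empirical CDF of a non-degenerate sample. -/
theorem hoeffCDF_Lskewness_Lkurtosis
    (m : ℕ) (hm : 2 ≤ m) (G : ℝ → ℝ) (hG : IsCDF G) (hGmean : HasFiniteMean G)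
    (hl2 : lambda2 G ≠ 0) :
    (lambda3 (hoeffCDF m G) / lambda2 (hoeffCDF m G)
        = (((m : ℝ) - 2) / m) * (lambda3 G / lambda2 G)) ∧
    (lambda4 (hoeffCDF m G) / lambda2 (hoeffCDF m G)
        = ((((m : ℝ) - 2) * ((m : ℝ) - 3)) / (m : ℝ) ^ 2) * (lambda4 G / lambda2 G)
            - 1 / (m : ℝ) ^ 2) ∧
    (∀ n : ℕ, ∀ x : ℕ → ℝ, (∃ i < n, ∃ j < n, x i ≠ x j) →
      (lambda3 (hoeffCDF m (ecdf n x)) / lambda2 (hoeffCDF m (ecdf n x))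
          = (((m : ℝ) - 2) / m) * (lambda3 (ecdf n x) / lambda2 (ecdf n x))) ∧
      (lambda4 (hoeffCDF m (ecdf n x)) / lambda2 (hoeffCDF m (ecdf n x))
          = ((((m : ℝ) - 2) * ((m : ℝ) - 3)) / (m : ℝ) ^ 2)
              * (lambda4 (ecdf n x) / lambda2 (ecdf n x)) - 1 / (m : ℝ) ^ 2)) := by
  obtain ⟨hskew, hkurt⟩ := Lskewness_Lkurtosis_hoeffCDF hm hG.monotoneOn_quantile hGmean hl2
  refine ⟨hskew, hkurt, ?_⟩
  rintro n x ⟨i, hi, j, hj, hij⟩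
  obtain ⟨v, hv, hvx, hxv⟩ := exists_monotoneOn_ecdf_eq n x
  obtain ⟨a, ha, hva⟩ := hxv i hi
  obtain ⟨b, hb, hvb⟩ := hxv j hj
  have hn : 0 < n := by omega
  rw [← hvx]
  exact Lskewness_Lkurtosis_hoeffCDF hm (monotoneOn_quantile_ecdf hn hv) (hasFiniteMean_ecdf hn hv)
    (lambda2_ecdf_pos hv ha hb (by rwa [hva, hvb])).ne'
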